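/- arXiv:1601.00938 — 4 statements merged into one kernel-verified Lean document; each statement's English description precedes it below -/
import Mathlib

section
/- Let w be a nonnegative locally integrable function on ℝ. If for some 0 < ε < 1 and all real numbers a < b < c and all measurable sets E ⊆ (a,b) one has w(E)/w(a,c) ≤ 2 (|E|/(c-b))^{ε/(1+ε)}, then for all a < b < c the one-sided reverse Hölder inequality (c-b)^{ε/2} ∫_a^b w^{1+ε/2} ≤ 6 (∫_a^c w)^{1+ε/2} holds. -/
/-!
Write `W = ∫_a^c w`, `δ = c - b` and `E_t = {w > t} ∩ (a, b)`. Chebyshev gives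
`t |E_t| ≤ w(E_t)`; inserting this into the hypothesis and solving for `w(E_t)` yields the
weak-type bound `w(E_t) ≤ (2W)^(1+ε) (δ t)^(-ε)`, besides the trivial `w(E_t) ≤ W`. The
layer-cake formula for the measure `w dx` on `(a, b)` writes `∫_a^b w^(1+ε/2)` as
`(ε/2) ∫_0^∞ t^(ε/2-1) w(E_t) dt`; using the trivial bound below the point where the two
bounds cross and the weak-type bound above it gives
`∫_a^b w^(1+ε/2) ≤ 2^((3+ε)/2) W^(1+ε/2) δ^(-ε/2)`, and `2^((3+ε)/2) ≤ 4`.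
-/

open MeasureTheory Set

noncomputable def Mplus (f : ℝ → ℝ) (x : ℝ) : ℝ :=
  ⨆ h : {h : ℝ // 0 < h}, (h.1)⁻¹ * ∫ t in x..(x + h.1), |f t|

noncomputable def Mminus (f : ℝ → ℝ) (x : ℝ) : ℝ :=
  ⨆ h : {h : ℝ // 0 < h}, (h.1)⁻¹ * ∫ t in (x - h.1)..x, |f t|

noncomputable def halo (γ : ℝ) (E : Set ℝ) : Set ℝ :=
  {x | γ < Mplus (E.indicator fun _ => (1:ℝ)) x}

noncomputable def wsize (w : ℝ → ℝ) (E : Set ℝ) : ENNReal :=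
  ∫⁻ x in E, ENNReal.ofReal (w x)

noncomputable def tauber (w : ℝ → ℝ) (α : ℝ) : ENNReal :=
  ⨆ E : {E : Set ℝ // MeasurableSet E ∧ 0 < wsize w E ∧ wsize w E < ⊤},
    wsize w (halo α E.1) / wsize w E.1

theorem lintegral_Ioc_zero_rpow {r c : ℝ} (hr : -1 < r) (hc : 0 ≤ c) :
    ∫⁻ t in Ioc 0 c, ENNReal.ofReal (t ^ r) = ENNReal.ofReal (c ^ (r + 1) / (r + 1)) := by
  have hint : IntegrableOn (fun t : ℝ => t ^ r) (Ioc 0 c) :=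
    (intervalIntegrable_iff_integrableOn_Ioc_of_le hc).mp
      (intervalIntegral.intervalIntegrable_rpow' hr)
  rw [← ofReal_integral_eq_lintegral_ofReal hint
      ((ae_restrict_mem measurableSet_Ioc).mono fun t ht => Real.rpow_nonneg ht.1.le r),
    ← intervalIntegral.integral_of_le hc, integral_rpow (Or.inl hr),
    Real.zero_rpow (by linarith), sub_zero]

theorem lintegral_Ioi_rpow {r c : ℝ} (hr : r < -1) (hc : 0 < c) :
    ∫⁻ t in Ioi c, ENNReal.ofReal (t ^ r) = ENNReal.ofReal (-c ^ (r + 1) / (r + 1)) := by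
  rw [← ofReal_integral_eq_lintegral_ofReal (integrableOn_Ioi_rpow_of_lt hr hc)
      ((ae_restrict_mem measurableSet_Ioi).mono fun t ht => Real.rpow_nonneg (hc.trans ht).le r),
    integral_Ioi_rpow_of_lt hr hc]

section LayerCake

variable {α : Type*} [MeasurableSpace α] {μ : Measure α} {f : α → ℝ} {p q A C : ℝ}

theorem lintegral_rpow_le_add_of_meas_lt_le (hf0 : 0 ≤ᵐ[μ] f) (hf : AEMeasurable f μ)
    (hp : 0 < p) (hpq : p < q) (hA : 0 ≤ A) (hC : 0 ≤ C)
    (hμA : ∀ t, 0 < t → μ {x | t < f x} ≤ ENNReal.ofReal A)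
    (hμC : ∀ t, 0 < t → μ {x | t < f x} ≤ ENNReal.ofReal (C * t ^ (-q)))
    {l : ℝ} (hl : 0 < l) :
    ∫⁻ x, ENNReal.ofReal (f x ^ p) ∂μ ≤
      ENNReal.ofReal (A * l ^ p + p / (q - p) * C * l ^ (p - q)) := by
  have hlow : ∫⁻ t in Ioc 0 l, μ {x | t < f x} * ENNReal.ofReal (t ^ (p - 1)) ≤
      ENNReal.ofReal (A * (l ^ p / p)) := by
    calc _ ≤ ∫⁻ t in Ioc 0 l, ENNReal.ofReal A * ENNReal.ofReal (t ^ (p - 1)) :=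
          setLIntegral_mono' measurableSet_Ioc fun t ht => mul_le_mul_left (hμA t ht.1) _
      _ = _ := by
          rw [lintegral_const_mul' _ _ ENNReal.ofReal_ne_top,
            lintegral_Ioc_zero_rpow (by linarith) hl.le, sub_add_cancel, ENNReal.ofReal_mul hA]
  have hhigh : ∫⁻ t in Ioi l, μ {x | t < f x} * ENNReal.ofReal (t ^ (p - 1)) ≤
      ENNReal.ofReal (C * (l ^ (p - q) / (q - p))) := by
    calc _ ≤ ∫⁻ t in Ioi l, ENNReal.ofReal C * ENNReal.ofReal (t ^ (p - q - 1)) := by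
          refine setLIntegral_mono' measurableSet_Ioi fun t ht => ?_
          have ht0 : 0 < t := hl.trans ht
          calc _ ≤ ENNReal.ofReal (C * t ^ (-q)) * ENNReal.ofReal (t ^ (p - 1)) :=
                mul_le_mul_left (hμC t ht0) _
            _ = _ := by
                rw [← ENNReal.ofReal_mul (by positivity), ← ENNReal.ofReal_mul hC, mul_assoc,
                  ← Real.rpow_add ht0]
                ring_nf
      _ = _ := by
          rw [lintegral_const_mul' _ _ ENNReal.ofReal_ne_top,
            lintegral_Ioi_rpow (by linarith) hl, ← ENNReal.ofReal_mul hC, sub_add_cancel,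
            neg_div, ← div_neg, neg_sub]
  rw [lintegral_rpow_eq_lintegral_meas_lt_mul μ hf0 hf hp, ← Ioc_union_Ioi_eq_Ioi hl.le,
    lintegral_union measurableSet_Ioi (Ioc_disjoint_Ioi le_rfl)]
  calc _ ≤ ENNReal.ofReal p *
        (ENNReal.ofReal (A * (l ^ p / p)) + ENNReal.ofReal (C * (l ^ (p - q) / (q - p)))) := by
        gcongr
    _ = _ := by
        rw [← ENNReal.ofReal_add (by positivity) (by positivity), ← ENNReal.ofReal_mul hp.le]
        congr 1
        field_simp

theorem lintegral_rpow_eq_zero_of_meas_lt_eq_zero (hf0 : 0 ≤ᵐ[μ] f) (hf : AEMeasurable f μ)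
    (hp : 0 < p) (h : ∀ t, 0 < t → μ {x | t < f x} = 0) :
    ∫⁻ x, ENNReal.ofReal (f x ^ p) ∂μ = 0 := by
  rw [lintegral_rpow_eq_lintegral_meas_lt_mul μ hf0 hf hp,
    setLIntegral_congr_fun measurableSet_Ioi fun t ht => by rw [h t ht, zero_mul]]
  simp

theorem lintegral_rpow_le_of_meas_lt_le (hf0 : 0 ≤ᵐ[μ] f) (hf : AEMeasurable f μ)
    (hp : 0 < p) (hpq : p < q) (hA : 0 ≤ A) (hC : 0 ≤ C)
    (hμA : ∀ t, 0 < t → μ {x | t < f x} ≤ ENNReal.ofReal A)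
    (hμC : ∀ t, 0 < t → μ {x | t < f x} ≤ ENNReal.ofReal (C * t ^ (-q))) :
    ∫⁻ x, ENNReal.ofReal (f x ^ p) ∂μ ≤
      ENNReal.ofReal (q / (q - p) * A ^ (1 - p / q) * C ^ (p / q)) := by
  rcases hA.eq_or_lt with rfl | hA0
  · simp [lintegral_rpow_eq_zero_of_meas_lt_eq_zero hf0 hf hp fun t ht => by simpa using hμA t ht]
  rcases hC.eq_or_lt with rfl | hC0
  · simp [lintegral_rpow_eq_zero_of_meas_lt_eq_zero hf0 hf hp fun t ht => by simpa using hμC t ht]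
  -- the two bounds `A` and `C * l ^ (-q)` on the distribution function cross at `l`
  set l := (C / A) ^ (1 / q) with hl
  have hq : 0 < q := hp.trans hpq
  refine (lintegral_rpow_le_add_of_meas_lt_le hf0 hf hp hpq hA hC hμA hμC
    (l := l) (by positivity)).trans_eq ?_
  have hlp : l ^ p = C ^ (p / q) / A ^ (p / q) := by
    rw [hl, ← Real.rpow_mul (by positivity), Real.div_rpow hC hA, one_div_mul_eq_div]
  have hlpq : l ^ (p - q) = C ^ (p / q) / C / (A ^ (p / q) / A) := by
    rw [hl, ← Real.rpow_mul (by positivity), Real.div_rpow hC hA, one_div_mul_eq_div, sub_div,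
      div_self hq.ne', Real.rpow_sub_one hC0.ne', Real.rpow_sub_one hA0.ne']
  have hA1 : A ^ (1 - p / q) = A / A ^ (p / q) := by rw [Real.rpow_sub hA0, Real.rpow_one]
  have hqp : 0 < q - p := sub_pos.2 hpq
  rw [hlp, hlpq, hA1]
  congr 1
  field_simp
  ring

end LayerCake

theorem lintegral_ofReal_rpow_withDensity_self {α : Type*} [MeasurableSpace α] (μ : Measure α)
    {f : α → ℝ} (hf : Measurable f) (hf0 : ∀ x, 0 ≤ f x) {p : ℝ} (hp : 0 ≤ p) :
    ∫⁻ x, ENNReal.ofReal (f x ^ p) ∂μ.withDensity (fun x => ENNReal.ofReal (f x)) =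
      ∫⁻ x, ENNReal.ofReal (f x ^ (1 + p)) ∂μ := by
  rw [lintegral_withDensity_eq_lintegral_mul _ hf.ennreal_ofReal
    (hf.pow_const p).ennreal_ofReal]
  refine lintegral_congr fun x => ?_
  rw [Pi.mul_apply, ← ENNReal.ofReal_mul (hf0 x), Real.rpow_add' (hf0 x) (by positivity),
    Real.rpow_one]

theorem le_rpow_mul_rpow_neg_of_le_mul_rpow {φ m s K ε : ℝ} (hφ : 0 ≤ φ) (hm : 0 ≤ m)
    (hs : 0 < s) (hK : 0 ≤ K) (hε : 0 ≤ ε) (hsm : s * m ≤ φ)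
    (hφK : φ ≤ K * m ^ (ε / (1 + ε))) :
    φ ≤ K ^ (1 + ε) * s ^ (-ε) := by
  rcases hφ.eq_or_lt with rfl | hφ0
  · positivity
  have hm' : m ≤ φ / s := by rwa [le_div_iff₀' hs]
  have hpow : φ ^ (1 + ε) ≤ K ^ (1 + ε) * (φ ^ ε * s ^ (-ε)) :=
    calc φ ^ (1 + ε) ≤ (K * m ^ (ε / (1 + ε))) ^ (1 + ε) := by gcongr
      _ = K ^ (1 + ε) * m ^ ε := by
        rw [Real.mul_rpow hK (by positivity), ← Real.rpow_mul hm, div_mul_cancel₀ _ (by positivity)]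
      _ ≤ K ^ (1 + ε) * (φ / s) ^ ε := by gcongr
      _ = K ^ (1 + ε) * (φ ^ ε * s ^ (-ε)) := by
        rw [Real.div_rpow hφ hs.le, Real.rpow_neg hs.le, div_eq_mul_inv]
  rw [Real.rpow_add' hφ (by positivity), Real.rpow_one, mul_comm, mul_left_comm] at hpow
  exact le_of_mul_le_mul_left hpow (by positivity)

section OneSidedWeight

variable {g : ℝ → ℝ} {a b c ε : ℝ}

theorem setIntegral_superlevel_le (hg : Measurable g) (hg0 : ∀ x, 0 ≤ g x)
    (hgI : IntegrableOn g (Ioo a c)) (hε : 0 ≤ ε) (hbc : b < c)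
    (h : ∀ E : Set ℝ, MeasurableSet E → E ⊆ Ioo a b →
      ∫ x in E, g x ≤ 2 * ((volume E).toReal / (c - b)) ^ (ε / (1 + ε)) * ∫ x in Ioo a c, g x)
    {t : ℝ} (ht : 0 < t) :
    ∫ x in {x | t < g x} ∩ Ioo a b, g x ≤
      (2 * ∫ x in Ioo a c, g x) ^ (1 + ε) * (c - b) ^ (-ε) * t ^ (-ε) := by
  set E := {x | t < g x} ∩ Ioo a b
  have hE : MeasurableSet E := (measurableSet_lt measurable_const hg).inter measurableSet_Ioo
  have hEac : E ⊆ Ioo a c := inter_subset_right.trans (Ioo_subset_Ioo_right hbc.le)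
  have hδ : 0 < c - b := sub_pos.2 hbc
  have hcheb : t * (volume E).toReal ≤ ∫ x in E, g x :=
    setIntegral_ge_of_const_le_real hE ((measure_mono hEac).trans_lt measure_Ioo_lt_top).ne
      (fun x hx => hx.1.le) (hgI.mono_set hEac)
  have hW : 0 ≤ ∫ x in Ioo a c, g x := setIntegral_nonneg measurableSet_Ioo fun x _ => hg0 x
  have hbound := le_rpow_mul_rpow_neg_of_le_mul_rpow (φ := ∫ x in E, g x)
    (m := (volume E).toReal / (c - b))
    (s := t * (c - b)) (K := 2 * ∫ x in Ioo a c, g x)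
    (setIntegral_nonneg hE fun x _ => hg0 x) (by positivity) (by positivity) (by positivity) hε
    (by rwa [mul_div_assoc', mul_right_comm, mul_div_cancel_right₀ _ hδ.ne'])
    (by rw [mul_right_comm]; exact h E hE inter_subset_right)
  rw [Real.mul_rpow ht.le hδ.le] at hbound
  exact hbound.trans_eq (by ring)

theorem setIntegral_rpow_le_of_measurable (hg : Measurable g) (hg0 : ∀ x, 0 ≤ g x)
    (hgI : IntegrableOn g (Ioo a c)) (hε0 : 0 < ε) (hbc : b < c)
    (h : ∀ E : Set ℝ, MeasurableSet E → E ⊆ Ioo a b →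
      ∫ x in E, g x ≤ 2 * ((volume E).toReal / (c - b)) ^ (ε / (1 + ε)) * ∫ x in Ioo a c, g x) :
    ∫ x in Ioo a b, g x ^ (1 + ε / 2) ≤
      2 * 2 ^ ((1 + ε) / 2) * (∫ x in Ioo a c, g x) ^ (1 + ε / 2) * (c - b) ^ (-(ε / 2)) := by
  set W := ∫ x in Ioo a c, g x
  have hW : 0 ≤ W := setIntegral_nonneg measurableSet_Ioo fun x _ => hg0 x
  have hδ : 0 < c - b := sub_pos.2 hbc
  set ν := (volume.restrict (Ioo a b)).withDensity fun x => ENNReal.ofReal (g x)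
  have hν : ∀ t, ν {x | t < g x} = ENNReal.ofReal (∫ x in {x | t < g x} ∩ Ioo a b, g x) := by
    intro t
    have hlevel := measurableSet_lt (measurable_const (a := t)) hg
    rw [withDensity_apply _ hlevel, Measure.restrict_restrict hlevel,
      ofReal_integral_eq_lintegral_ofReal
        (hgI.mono_set (inter_subset_right.trans (Ioo_subset_Ioo_right hbc.le)))
        (ae_of_all _ hg0)]
  have hνA : ∀ t, 0 < t → ν {x | t < g x} ≤ ENNReal.ofReal W := fun t _ =>
    (hν t).trans_le <| ENNReal.ofReal_le_ofReal <| setIntegral_mono_set hgI (ae_of_all _ hg0)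
      (inter_subset_right.trans (Ioo_subset_Ioo_right hbc.le)).eventuallyLE
  have hνC : ∀ t, 0 < t → ν {x | t < g x} ≤
      ENNReal.ofReal ((2 * W) ^ (1 + ε) * (c - b) ^ (-ε) * t ^ (-ε)) := fun t ht =>
    (hν t).trans_le <| ENNReal.ofReal_le_ofReal <|
      setIntegral_superlevel_le hg hg0 hgI hε0.le hbc h ht
  have hlint := lintegral_rpow_le_of_meas_lt_le (μ := ν) (ae_of_all _ hg0) hg.aemeasurable
    (half_pos hε0) (half_lt_self hε0) hW
    (mul_nonneg (Real.rpow_nonneg (by positivity) _) (Real.rpow_nonneg hδ.le _)) hνA hνC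
  rw [lintegral_ofReal_rpow_withDensity_self _ hg hg0 (half_pos hε0).le] at hlint
  have hconst : ε / (ε - ε / 2) * W ^ (1 - ε / 2 / ε) *
      ((2 * W) ^ (1 + ε) * (c - b) ^ (-ε)) ^ (ε / 2 / ε) =
      2 * 2 ^ ((1 + ε) / 2) * W ^ (1 + ε / 2) * (c - b) ^ (-(ε / 2)) := by
    have h2 : ε / (ε - ε / 2) = 2 := by field_simp; ring
    have hhalf : ε / 2 / ε = 1 / 2 := by field_simp
    rw [h2, hhalf, show (1 : ℝ) - 1 / 2 = 1 / 2 by norm_num,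
      Real.mul_rpow (by positivity) (Real.rpow_nonneg hδ.le _), ← Real.rpow_mul hδ.le,
      Real.mul_rpow zero_le_two hW, Real.mul_rpow (by positivity) (by positivity),
      ← Real.rpow_mul zero_le_two, ← Real.rpow_mul hW]
    have hWexp : W ^ (1 / 2 : ℝ) * W ^ ((1 + ε) * (1 / 2)) = W ^ (1 + ε / 2) := by
      rw [← Real.rpow_add' hW (by positivity)]; ring_nf
    rw [← hWexp, mul_one_div, neg_mul, mul_one_div]
    ring
  rw [integral_eq_lintegral_of_nonneg_ae (ae_of_all _ fun x => Real.rpow_nonneg (hg0 x) _)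
    (hg.pow_const _).aestronglyMeasurable]
  exact ENNReal.toReal_le_of_le_ofReal (by positivity) (hconst ▸ hlint)

end OneSidedWeight

theorem AEMeasurable.exists_measurable_nonneg_ae_eq {α : Type*} [MeasurableSpace α]
    {μ : Measure α} {f : α → ℝ} (hf : AEMeasurable f μ) (hf0 : 0 ≤ᵐ[μ] f) :
    ∃ g : α → ℝ, Measurable g ∧ (∀ x, 0 ≤ g x) ∧ f =ᵐ[μ] g := by
  refine ⟨fun x => Max.max (hf.mk f x) 0, hf.measurable_mk.max measurable_const,
    fun x => le_max_right _ _, ?_⟩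
  filter_upwards [hf.ae_eq_mk, hf0] with x hx hx0
  rw [← hx]; exact (max_eq_left hx0).symm

theorem stmt3 (w : ℝ → ℝ) (hw : ∀ x, 0 ≤ w x) (hloc : LocallyIntegrable w volume)
    (ε : ℝ) (hε0 : 0 < ε) (hε1 : ε < 1)
    (h : ∀ a b c : ℝ, a < b → b < c → ∀ E : Set ℝ, MeasurableSet E → E ⊆ Ioo a b →
      ∫ x in E, w x ≤ 2 * ((volume E).toReal / (c - b)) ^ (ε / (1 + ε)) * ∫ x in Ioo a c, w x) :
    ∀ a b c : ℝ, a < b → b < c →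
      (c - b) ^ (ε / 2) * ∫ x in Ioo a b, w x ^ (1 + ε / 2)
        ≤ 6 * (∫ x in Ioo a c, w x) ^ (1 + ε / 2) := by
  intro a b c hab hbc
  obtain ⟨g, hg, hg0, hwg⟩ :=
    hloc.aestronglyMeasurable.aemeasurable.exists_measurable_nonneg_ae_eq (ae_of_all _ hw)
  have hint : ∀ s, ∫ x in s, w x = ∫ x in s, g x := fun s =>
    integral_congr_ae (ae_restrict_of_ae hwg)
  have hgI : IntegrableOn g (Ioo a c) :=
    ((hloc.integrableOn_isCompact isCompact_Icc).mono_set Ioo_subset_Icc_self).congr_fun_ae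
      (ae_restrict_of_ae hwg)
  have hpow : ∫ x in Ioo a b, w x ^ (1 + ε / 2) = ∫ x in Ioo a b, g x ^ (1 + ε / 2) :=
    integral_congr_ae (ae_restrict_of_ae (hwg.mono fun x hx => congrArg (· ^ (1 + ε / 2)) hx))
  have hbound := setIntegral_rpow_le_of_measurable hg hg0 hgI hε0 hbc fun E hE hEab => by
    simpa only [hint] using h a b c hab hbc E hE hEab
  have h2 : (2 : ℝ) ^ ((1 + ε) / 2) ≤ 2 :=
    (Real.rpow_le_rpow_of_exponent_le one_le_two (by linarith)).trans_eq (Real.rpow_one 2)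
  rw [hint, hpow]
  set W := ∫ x in Ioo a c, g x
  calc (c - b) ^ (ε / 2) * ∫ x in Ioo a b, g x ^ (1 + ε / 2)
      ≤ (c - b) ^ (ε / 2) * (2 * 2 ^ ((1 + ε) / 2) * W ^ (1 + ε / 2) * (c - b) ^ (-(ε / 2))) := by
        gcongr
    _ = 2 * 2 ^ ((1 + ε) / 2) * W ^ (1 + ε / 2) := by
        have hδ : 0 < (c - b) ^ (ε / 2) := Real.rpow_pos_of_pos (sub_pos.2 hbc) _
        rw [Real.rpow_neg (sub_pos.2 hbc).le]
        field_simp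
    _ ≤ 6 * W ^ (1 + ε / 2) := mul_le_mul_of_nonneg_right (by linarith)
        (Real.rpow_nonneg (setIntegral_nonneg measurableSet_Ioo fun x _ => hg0 x) _)
end

section
/- Let E ⊆ ℝ be measurable and 0 < λ < α < 1. Define the halo H⁺_λ(E) = {x ∈ ℝ : M⁺1_E(x) > λ}. Then H⁺_λ(E) ⊆ H⁺_{λ/α}(H⁺_α(E)). -/
/-!
If `x` lies in the open set `H = H⁺_α(E)`, a whole interval `(x, u]` lies in `H`, so the average of
`1_H` over it is `1 > λ/α`. Otherwise every average of `1_E` over an interval `(x, x + h]` is at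
most `α`, and a one-sided rising sun argument gives `|E ∩ (x, b]| ≤ α |H ∩ (x, b]|` for all `b`:
almost every point of `E` lies in `H` by Lebesgue differentiation, and every component `(a, c)` of
the open set `H ∩ (x, b)` has its left endpoint `a` outside `H`, whence `|E ∩ (a, c)| ≤ α (c - a)`;
summing over the countably many components gives the bound. So an average `> λ` of `1_E` over
`(x, x + h]` forces an average `> λ/α` of `1_H` over the same interval.
-/

open MeasureTheory Set

section OpenSubsetsOfReal

variable {U : Set ℝ}

lemma sInf_Ioi_diff_notMem (hU : IsOpen U) {a : ℝ} (hne : (Ioi a \ U).Nonempty) :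
    sInf (Ioi a \ U) ∉ U :=
  (closure_minimal (sdiff_subset_sdiff_left Ioi_subset_Ici_self) (isClosed_Ici.sdiff hU)
    (csInf_mem_closure hne (bddBelow_Ioi.mono sdiff_subset))).2

lemma Ioo_sInf_Ioi_diff_subset (a : ℝ) : Ioo a (sInf (Ioi a \ U)) ⊆ U := fun t ht => by
  by_contra htU
  exact (csInf_le (bddBelow_Ioi.mono sdiff_subset) ⟨ht.1, htU⟩).not_gt ht.2

lemma exists_notMem_mem_Ioo_sInf_Ioi_diff (hU : IsOpen U) (hbdd : Bornology.IsBounded U)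
    {y : ℝ} (hy : y ∈ U) : ∃ a ∉ U, y ∈ Ioo a (sInf (Ioi a \ U)) := by
  have hne : (Iic y \ U).Nonempty :=
    sdiff_nonempty.2 fun h => not_bddBelow_Iic y (hbdd.bddBelow.mono h)
  set a := sSup (Iic y \ U)
  have ha : a ∈ Iic y \ U :=
    (isClosed_Iic.sdiff hU).csSup_mem hne (bddAbove_Iic.mono sdiff_subset)
  have hne' : (Ioi a \ U).Nonempty :=
    sdiff_nonempty.2 fun h => not_bddAbove_Ioi a (hbdd.bddAbove.mono h)
  have hyr : y ≤ sInf (Ioi a \ U) := le_csInf hne' fun t ht => by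
    by_contra! hty
    exact (le_csSup (bddAbove_Iic.mono sdiff_subset) ⟨hty.le, ht.2⟩).not_gt ht.1
  exact ⟨a, ha.2, lt_of_le_of_ne ha.1 fun h => ha.2 (h ▸ hy),
    lt_of_le_of_ne hyr fun h => sInf_Ioi_diff_notMem hU hne' (h ▸ hy)⟩

lemma IsOpen.exists_countable_pairwiseDisjoint_biUnion_Ioo (hU : IsOpen U)
    (hbdd : Bornology.IsBounded U) :
    ∃ (A : Set ℝ) (r : ℝ → ℝ), A.Countable ∧ A.PairwiseDisjoint (fun a => Ioo a (r a)) ∧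
      ⋃ a ∈ A, Ioo a (r a) = U ∧ ∀ a ∈ A, a ∉ U := by
  set r : ℝ → ℝ := fun a => sInf (Ioi a \ U)
  set A := {a | a ∉ U ∧ a < r a}
  have hdisj : A.PairwiseDisjoint (fun a => Ioo a (r a)) := by
    by_contra h
    obtain ⟨a, -, b, hb, hab, t, hta, htb⟩ := exists_lt_mem_inter_of_not_pairwiseDisjoint h
    have hrb : r a ≤ b := csInf_le (bddBelow_Ioi.mono sdiff_subset) ⟨hab, hb.1⟩
    linarith [hta.2, htb.1]
  refine ⟨A, r, hdisj.countable_of_Ioo fun a ha => ha.2, hdisj, ?_, fun a ha => ha.1⟩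
  refine subset_antisymm (iUnion₂_subset fun a _ => Ioo_sInf_Ioi_diff_subset a) fun y hy => ?_
  obtain ⟨a, haU, hya⟩ := exists_notMem_mem_Ioo_sInf_Ioi_diff hU hbdd hy
  exact mem_biUnion ⟨haU, hya.1.trans hya.2⟩ hya

lemma IsOpen.measure_le_of_forall_Ioo (hU : IsOpen U) (hbdd : Bornology.IsBounded U)
    {μ ν : Measure ℝ} (h : ∀ a c, a ∉ U → Ioo a c ⊆ U → ν (Ioo a c) ≤ μ (Ioo a c)) :
    ν U ≤ μ U := by
  obtain ⟨A, r, hA, hdisj, hU_eq, hends⟩ := hU.exists_countable_pairwiseDisjoint_biUnion_Ioo hbdd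
  have hsub (a : ℝ) (ha : a ∈ A) : Ioo a (r a) ⊆ U := by
    rw [← hU_eq]; exact subset_biUnion_of_mem (u := fun a => Ioo a (r a)) ha
  calc ν U = ν (⋃ a ∈ A, Ioo a (r a)) := by rw [hU_eq]
    _ ≤ ∑' a : A, ν (Ioo a (r a)) := measure_biUnion_le ν hA _
    _ ≤ ∑' a : A, μ (Ioo a (r a)) :=
        ENNReal.tsum_le_tsum fun a => h _ _ (hends a a.2) (hsub a a.2)
    _ = μ U := by rw [← measure_biUnion hA hdisj fun _ _ => measurableSet_Ioo, hU_eq]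

end OpenSubsetsOfReal

section Halo

variable {S : Set ℝ}

lemma intervalIntegrable_indicator_one (hS : MeasurableSet S) (a b : ℝ) :
    IntervalIntegrable (S.indicator (1 : ℝ → ℝ)) volume a b :=
  intervalIntegrable_iff.2 ((integrableOn_const (by simp)).indicator hS)

lemma intervalIntegral_indicator_one (hS : MeasurableSet S) {a b : ℝ} (hab : a ≤ b) :
    ∫ t in a..b, S.indicator (1 : ℝ → ℝ) t = volume.real (S ∩ Ioc a b) := by
  rw [intervalIntegral.integral_of_le hab, integral_indicator_one hS,
    measureReal_restrict_apply hS, inter_comm]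

lemma volume_real_inter_Ioc_eq_sub (hS : MeasurableSet S) {a b : ℝ} (hab : a ≤ b) :
    volume.real (S ∩ Ioc a b) =
      (∫ t in 0..b, S.indicator (1 : ℝ → ℝ) t) - ∫ t in 0..a, S.indicator (1 : ℝ → ℝ) t := by
  rw [intervalIntegral.integral_interval_sub_left (intervalIntegrable_indicator_one hS 0 b)
    (intervalIntegrable_indicator_one hS 0 a), intervalIntegral_indicator_one hS hab]

lemma Mplus_indicator_one (hS : MeasurableSet S) (x : ℝ) :
    Mplus (S.indicator fun _ => 1) x =
      ⨆ h : {h : ℝ // 0 < h}, (h.1)⁻¹ * volume.real (S ∩ Ioc x (x + h.1)) := by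
  have habs : (fun t => |S.indicator (fun _ => (1:ℝ)) t|) = S.indicator (1 : ℝ → ℝ) := by
    ext t; by_cases ht : t ∈ S <;> simp [ht]
  refine iSup_congr fun h => ?_
  rw [habs, intervalIntegral_indicator_one hS (le_add_of_nonneg_right h.2.le)]

lemma mem_halo_iff (hS : MeasurableSet S) {γ x : ℝ} :
    x ∈ halo γ S ↔ ∃ h > 0, γ * h < volume.real (S ∩ Ioc x (x + h)) := by
  have hbdd : BddAbove (range fun h : {h : ℝ // 0 < h} =>
      (h.1)⁻¹ * volume.real (S ∩ Ioc x (x + h.1))) := by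
    refine ⟨1, forall_mem_range.2 fun h => (inv_mul_le_one₀ h.2).2 ?_⟩
    grw [inter_subset_right, Real.volume_real_Ioc_of_le (le_add_of_nonneg_right h.2.le),
      add_sub_cancel_left]
    simp
  rw [halo, mem_ofPred_eq, Mplus_indicator_one hS, lt_ciSup_iff hbdd]
  exact ⟨fun ⟨⟨h, hh⟩, hlt⟩ => ⟨h, hh, by rwa [lt_inv_mul_iff₀' hh] at hlt⟩,
    fun ⟨h, hh, hlt⟩ => ⟨⟨h, hh⟩, by rwa [lt_inv_mul_iff₀' hh]⟩⟩

lemma isOpen_halo (hS : MeasurableSet S) (γ : ℝ) : IsOpen (halo γ S) := by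
  have hΦ : Continuous fun y => ∫ t in 0..y, S.indicator (1 : ℝ → ℝ) t :=
    intervalIntegral.continuous_primitive (intervalIntegrable_indicator_one hS) 0
  have : halo γ S = ⋃ h > 0, {x | γ * h < volume.real (S ∩ Ioc x (x + h))} := by
    ext x; simp [mem_halo_iff hS]
  rw [this]
  refine isOpen_biUnion fun h hh => isOpen_lt continuous_const ?_
  simp_rw [volume_real_inter_Ioc_eq_sub hS (le_add_of_nonneg_right (le_of_lt hh))]
  exact (hΦ.comp (continuous_add_const h)).sub hΦ

lemma ae_le_halo (hS : MeasurableSet S) {γ : ℝ} (hγ : γ < 1) : S ≤ᵐ[volume] halo γ S := by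
  have hloc : LocallyIntegrable (S.indicator (1 : ℝ → ℝ)) volume :=
    (locallyIntegrable_const 1).indicator hS
  filter_upwards [LocallyIntegrable.ae_hasDerivAt_integral hloc] with x hx hxS
  have hslope := (hx 0).tendsto_slope_zero_right
  rw [indicator_of_mem hxS] at hslope
  obtain ⟨h, hγh, hh⟩ :=
    ((hslope.eventually (lt_mem_nhds hγ)).and self_mem_nhdsWithin).exists
  refine (mem_halo_iff hS).2 ⟨h, hh, ?_⟩
  rwa [volume_real_inter_Ioc_eq_sub hS (le_add_of_nonneg_right (le_of_lt hh)),
    ← lt_inv_mul_iff₀' hh]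

lemma notMem_halo_iff (hS : MeasurableSet S) {γ x : ℝ} :
    x ∉ halo γ S ↔ ∀ h > 0, volume.real (S ∩ Ioc x (x + h)) ≤ γ * h := by
  simp [mem_halo_iff hS]

end Halo

lemma volume_inter_Ioc_ne_top (S : Set ℝ) (a b : ℝ) : volume (S ∩ Ioc a b) ≠ ⊤ :=
  ((measure_mono inter_subset_right).trans_lt measure_Ioc_lt_top).ne

section NotMemHalo

variable {E : Set ℝ} {α : ℝ}

lemma nonneg_of_notMem_halo (hE : MeasurableSet E) {x : ℝ} (hx : x ∉ halo α E) : 0 ≤ α := by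
  have := (notMem_halo_iff hE).1 hx 1 one_pos
  linarith [measureReal_nonneg (μ := volume) (s := E ∩ Ioc x (x + 1))]

lemma volume_inter_Ioo_le_of_notMem_halo (hE : MeasurableSet E) {a : ℝ} (ha : a ∉ halo α E)
    (c : ℝ) : volume (E ∩ Ioo a c) ≤ ENNReal.ofReal α * volume (Ioo a c) := by
  rcases le_or_gt c a with hca | hac
  · simp [Ioo_eq_empty_of_le hca]
  have hEac := (notMem_halo_iff hE).1 ha (c - a) (sub_pos.2 hac)
  rw [add_sub_cancel] at hEac
  calc volume (E ∩ Ioo a c) ≤ volume (E ∩ Ioc a c) :=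
        measure_mono (inter_subset_inter_right _ Ioo_subset_Ioc_self)
    _ = ENNReal.ofReal (volume.real (E ∩ Ioc a c)) :=
        (ofReal_measureReal (volume_inter_Ioc_ne_top E a c)).symm
    _ ≤ ENNReal.ofReal (α * (c - a)) := ENNReal.ofReal_le_ofReal hEac
    _ = ENNReal.ofReal α * volume (Ioo a c) := by
        rw [Real.volume_Ioo, ENNReal.ofReal_mul (nonneg_of_notMem_halo hE ha)]

/-- One-sided rising sun lemma. -/
lemma volume_real_inter_Ioc_le_of_notMem_halo (hE : MeasurableSet E) (hα : α < 1) {x : ℝ}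
    (hx : x ∉ halo α E) (b : ℝ) :
    volume.real (E ∩ Ioc x b) ≤ α * volume.real (halo α E ∩ Ioc x b) := by
  set H := halo α E
  set U := H ∩ Ioo x b
  have hU : IsOpen U := (isOpen_halo hE α).inter isOpen_Ioo
  have hends (a c : ℝ) (ha : a ∉ U) (hsub : Ioo a c ⊆ U) : a ∉ H ∨ c ≤ a := by
    refine or_iff_not_imp_right.2 fun hac => ?_
    obtain ⟨t, ht⟩ := nonempty_Ioo.2 (not_le.1 hac)
    have htU := hsub ht
    have hxa : x ≤ a := by
      by_contra! hax
      exact lt_irrefl x (hsub ⟨hax, htU.2.1.trans ht.2⟩).2.1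
    rcases hxa.eq_or_lt with rfl | hxa
    · exact hx
    · exact fun haH => ha ⟨haH, hxa, ht.1.trans htU.2.2⟩
  have hcomp (a c : ℝ) (ha : a ∉ U) (hsub : Ioo a c ⊆ U) :
      volume.restrict E (Ioo a c) ≤ (ENNReal.ofReal α • volume) (Ioo a c) := by
    rw [Measure.restrict_apply measurableSet_Ioo, inter_comm, Measure.smul_apply, smul_eq_mul]
    rcases hends a c ha hsub with haH | hca
    · exact volume_inter_Ioo_le_of_notMem_halo hE haH c
    · simp [Ioo_eq_empty_of_le hca]
  have hae : (E ∩ Ioc x b : Set ℝ) ≤ᵐ[volume] (U ∩ E : Set ℝ) := by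
    filter_upwards [ae_le_halo hE hα, (countable_singleton b).ae_notMem volume]
      with y hyH hyb ⟨hyE, hxy, hyb'⟩
    exact ⟨⟨hyH hyE, hxy, lt_of_le_of_ne hyb' hyb⟩, hyE⟩
  have key : volume (E ∩ Ioc x b) ≤ ENNReal.ofReal α * volume (H ∩ Ioc x b) :=
    calc volume (E ∩ Ioc x b) ≤ volume.restrict E U := by
          rw [Measure.restrict_apply hU.measurableSet]; exact measure_mono_ae hae
      _ ≤ (ENNReal.ofReal α • volume) U :=
          hU.measure_le_of_forall_Ioo (Metric.isBounded_Ioo x b |>.subset inter_subset_right) hcomp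
      _ ≤ ENNReal.ofReal α * volume (H ∩ Ioc x b) := by
          rw [Measure.smul_apply, smul_eq_mul]
          gcongr
          exact inter_subset_inter_right _ Ioo_subset_Ioc_self
  have := ENNReal.toReal_mono
    (ENNReal.mul_ne_top ENNReal.ofReal_ne_top (volume_inter_Ioc_ne_top H x b)) key
  rwa [ENNReal.toReal_mul, ENNReal.toReal_ofReal (nonneg_of_notMem_halo hE hx)] at this

end NotMemHalo

theorem stmt6 (E : Set ℝ) (hE : MeasurableSet E) (lam α : ℝ)
    (h0 : 0 < lam) (h1 : lam < α) (h2 : α < 1) :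
    halo lam E ⊆ halo (lam / α) (halo α E) := by
  intro x hx
  have hα : 0 < α := h0.trans h1
  have hH := isOpen_halo hE α
  obtain ⟨h, hh, hlt⟩ := (mem_halo_iff hE).1 hx
  rw [mem_halo_iff hH.measurableSet]
  by_cases hxH : x ∈ halo α E
  · obtain ⟨u, hxu, hsub⟩ :=
      mem_nhdsGT_iff_exists_Ioc_subset.1 (mem_nhdsWithin_of_mem_nhds (hH.mem_nhds hxH))
    refine ⟨u - x, sub_pos.2 hxu, ?_⟩
    rw [add_sub_cancel, inter_eq_right.2 hsub, Real.volume_real_Ioc_of_le hxu.le]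
    exact mul_lt_of_lt_one_left (sub_pos.2 hxu) ((div_lt_one hα).2 h1)
  · refine ⟨h, hh, ?_⟩
    have hkey := volume_real_inter_Ioc_le_of_notMem_halo hE h2 hxH (x + h)
    rw [div_mul_eq_mul_div, div_lt_iff₀' hα]
    exact hlt.trans_le hkey
end

section
/- Let w be a nonnegative locally integrable function on ℝ and suppose that for some β > 1 there is a constant K such that for all α with 1 - e^{-β} < α < 1 and all measurable E with 0 < w(E) < ∞, w({x : M⁺1_E(x) > α}) ≤ (1 + K(1-α)^{1/β}) w(E). Then for all a < b < c and all measurable E ⊆ (a,b), w(E)/w(a,c) ≤ max(e, K) · (|E|/(c-b))^{1/β}. -/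
open MeasureTheory Set

lemma wsize_mono (w : ℝ → ℝ) {A B : Set ℝ} (h : A ⊆ B) : wsize w A ≤ wsize w B :=
  lintegral_mono' (Measure.restrict_mono h le_rfl) le_rfl

lemma wsize_null (w : ℝ → ℝ) {A : Set ℝ} (h : volume A = 0) : wsize w A = 0 := by
  unfold wsize
  rw [Measure.restrict_eq_zero.2 h, lintegral_zero_measure]

lemma ind_intervalIntegrable {F : Set ℝ} (hF : MeasurableSet F) (x y : ℝ) :
    IntervalIntegrable (F.indicator fun _ => (1:ℝ)) volume x y := by
  constructor <;>
  · rw [IntegrableOn, integrable_indicator_iff hF]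
    refine integrableOn_const (ne_of_lt ?_)
    rw [Measure.restrict_apply hF]
    exact lt_of_le_of_lt (measure_mono inter_subset_right) measure_Ioc_lt_top

lemma ind_abs (F : Set ℝ) (t : ℝ) :
    |F.indicator (fun _ => (1:ℝ)) t| = F.indicator (fun _ => (1:ℝ)) t :=
  abs_of_nonneg (indicator_nonneg (fun _ _ => zero_le_one) t)

lemma ind_le_one (F : Set ℝ) (t : ℝ) : |F.indicator (fun _ => (1:ℝ)) t| ≤ 1 := by
  rw [ind_abs]; by_cases ht : t ∈ F <;> simp [indicator, ht]

lemma mplus_bdd {F : Set ℝ} (hF : MeasurableSet F) (x : ℝ) :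
    BddAbove (range fun h : {h : ℝ // 0 < h} =>
      (h.1)⁻¹ * ∫ t in x..(x + h.1), |F.indicator (fun _ => (1:ℝ)) t|) := by
  refine ⟨1, ?_⟩
  rintro y ⟨h, rfl⟩
  have hint : ∫ t in x..(x + h.1), |F.indicator (fun _ => (1:ℝ)) t| ≤ h.1 := by
    have := intervalIntegral.integral_mono_on (μ := volume)
      (by linarith [h.2] : x ≤ x + h.1)
      ((ind_intervalIntegrable hF x (x + h.1)).abs)
      intervalIntegrable_const (fun t _ => ind_le_one F t)
    simpa using this
  have h0 : (0:ℝ) < h.1 := h.2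
  calc (h.1)⁻¹ * ∫ t in x..(x + h.1), |F.indicator (fun _ => (1:ℝ)) t|
      ≤ (h.1)⁻¹ * h.1 := by
        apply mul_le_mul_of_nonneg_left hint (by positivity)
    _ = 1 := inv_mul_cancel₀ h0.ne'

lemma mplus_ge {F : Set ℝ} (hF : MeasurableSet F) {x c : ℝ} (hxc : x < c) :
    (c - x)⁻¹ * (volume (F ∩ Ioc x c)).toReal ≤ Mplus (F.indicator fun _ => (1:ℝ)) x := by
  have hterm := le_ciSup (mplus_bdd hF x) ⟨c - x, sub_pos.2 hxc⟩
  have hval : (c - x)⁻¹ * ∫ t in x..(x + (c - x)), |F.indicator (fun _ => (1:ℝ)) t|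
      = (c - x)⁻¹ * (volume (F ∩ Ioc x c)).toReal := by
    congr 1
    have hxc' : x + (c - x) = c := by ring
    rw [hxc']
    have h1 : ∀ t, |F.indicator (fun _ => (1:ℝ)) t| = F.indicator (fun _ => (1:ℝ)) t := ind_abs F
    simp_rw [h1]
    rw [intervalIntegral.integral_of_le hxc.le, setIntegral_indicator hF, setIntegral_const]
    rw [inter_comm]
    simp
    rfl
  rw [hval] at hterm
  exact hterm

lemma mem_halo_of {F : Set ℝ} (hF : MeasurableSet F) {α x c : ℝ} (hxc : x < c)
    (hα : α * (c - x) < (volume (F ∩ Ioc x c)).toReal) : x ∈ halo α F := by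
  have hpos : (0:ℝ) < c - x := sub_pos.2 hxc
  have h1 : α < (c - x)⁻¹ * (volume (F ∩ Ioc x c)).toReal := by
    rw [lt_inv_mul_iff₀ hpos]
    linarith [hα]
  exact lt_of_lt_of_le h1 (mplus_ge hF hxc)

lemma cover_halo {a b c : ℝ} (hab : a < b) (hbc : b < c) {E F : Set ℝ}
    (hEab : E ⊆ Ioo a b) (hvol : volume E ≠ 0)
    (hF : MeasurableSet F) (hGF : Ioo a c \ E ⊆ F) :
    Ioo a c ⊆ halo (1 - (volume E).toReal / (c - b)) F := by
  intro x hx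
  set lam := (volume E).toReal with hlam
  have hvolE_lt : volume E < ⊤ :=
    lt_of_le_of_lt (measure_mono hEab) measure_Ioo_lt_top
  have hlam_pos : 0 < lam := ENNReal.toReal_pos hvol hvolE_lt.ne
  have hcb : (0:ℝ) < c - b := by linarith
  have hxc : x < c := hx.2
  apply mem_halo_of hF hxc
  have hincl : Ioo x c \ E ⊆ F ∩ Ioc x c := by
    rintro t ⟨ht1, ht2⟩
    exact ⟨hGF ⟨⟨lt_trans hx.1 ht1.1, ht1.2⟩, ht2⟩, ⟨ht1.1, ht1.2.le⟩⟩
  have hfinIoc : volume (F ∩ Ioc x c) ≠ ⊤ :=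
    (lt_of_le_of_lt (measure_mono inter_subset_right) measure_Ioc_lt_top).ne
  have hle : (volume (Ioo x c \ E)).toReal ≤ (volume (F ∩ Ioc x c)).toReal :=
    ENNReal.toReal_mono hfinIoc (measure_mono hincl)
  refine lt_of_lt_of_le ?_ hle
  by_cases hxb : x < b
  · have h1 : volume (Ioo x c) ≤ volume (Ioo x c \ E) + volume E := by
      refine le_trans (measure_mono ?_) (measure_union_le _ _)
      intro t ht
      by_cases h : t ∈ E
      exacts [Or.inr h, Or.inl ⟨ht, h⟩]
    have hdf : volume (Ioo x c \ E) ≠ ⊤ :=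
      (lt_of_le_of_lt (measure_mono diff_subset) measure_Ioo_lt_top).ne
    have h2 : c - x ≤ (volume (Ioo x c \ E)).toReal + lam := by
      have h3 := ENNReal.toReal_mono
        (by rw [ENNReal.add_ne_top]; exact ⟨hdf, hvolE_lt.ne⟩) h1
      rw [ENNReal.toReal_add hdf hvolE_lt.ne, Real.volume_Ioo,
        ENNReal.toReal_ofReal (by linarith)] at h3
      exact h3
    have hr : 0 < lam / (c - b) := div_pos hlam_pos hcb
    have hlameq : lam = lam / (c - b) * (c - b) := by field_simp
    nlinarith [mul_pos hr (sub_pos.2 hxb)]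
  · push_neg at hxb
    have hdiff : Ioo x c \ E = Ioo x c := by
      ext t
      simp only [mem_diff, mem_Ioo, and_iff_left_iff_imp]
      rintro ⟨ht1, ht2⟩ htE
      exact absurd (hEab htE).2 (not_lt.2 (by linarith))
    rw [hdiff, Real.volume_Ioo, ENNReal.toReal_ofReal (by linarith)]
    have hr : 0 < lam / (c - b) := div_pos hlam_pos hcb
    nlinarith [sub_pos.2 hxc]

lemma wsize_Ioo_lt_top {w : ℝ → ℝ} (hloc : LocallyIntegrable w volume) (a c : ℝ) :
    wsize w (Ioo a c) < ⊤ := by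
  have hint : IntegrableOn w (Ioo a c) volume :=
    (hloc.integrableOn_isCompact isCompact_Icc).mono_set Ioo_subset_Icc_self
  exact hint.lintegral_lt_top

theorem stmt9 (w : ℝ → ℝ) (hw : ∀ x, 0 ≤ w x) (hloc : LocallyIntegrable w volume)
    (β K : ℝ) (hβ : 1 < β) (hK : 0 ≤ K)
    (h : ∀ α : ℝ, 1 - Real.exp (-β) < α → α < 1 →
      ∀ E : Set ℝ, MeasurableSet E → 0 < wsize w E → wsize w E < ⊤ →
      wsize w (halo α E) ≤ ENNReal.ofReal (1 + K * (1 - α) ^ (1 / β)) * wsize w E) :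
    ∀ a b c : ℝ, a < b → b < c → ∀ E : Set ℝ, MeasurableSet E → E ⊆ Ioo a b →
      wsize w E ≤ ENNReal.ofReal (max (Real.exp 1) K * ((volume E).toReal / (c - b)) ^ (1 / β))
        * wsize w (Ioo a c) := by
  intro a b c hab hbc E hE hEab
  have hEac : E ⊆ Ioo a c := fun x hx => ⟨(hEab hx).1, lt_trans (hEab hx).2 hbc⟩
  by_cases hws0 : wsize w E = 0
  · rw [hws0]; exact zero_le
  have hvolE_lt : volume E < ⊤ := lt_of_le_of_lt (measure_mono hEab) measure_Ioo_lt_top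
  have hvol0 : volume E ≠ 0 := fun h0 => hws0 (wsize_null w h0)
  set lam := (volume E).toReal with hlamdef
  have hlam_pos : 0 < lam := ENNReal.toReal_pos hvol0 hvolE_lt.ne
  have hcb : (0:ℝ) < c - b := by linarith
  have hr_pos : 0 < lam / (c - b) := div_pos hlam_pos hcb
  have hβ0 : (0:ℝ) < 1/β := by positivity
  have hδ_nonneg : (0:ℝ) ≤ (lam / (c-b)) ^ (1/β) := Real.rpow_nonneg hr_pos.le _
  by_cases hbig : Real.exp (-β) ≤ lam / (c - b)
  · have e1 : Real.exp (-β) ^ ((1:ℝ)/β) = Real.exp (-1) := by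
      rw [Real.rpow_def_of_pos (Real.exp_pos _), Real.log_exp]
      congr 1
      field_simp
    have e2 : Real.exp (-β) ^ ((1:ℝ)/β) ≤ (lam/(c-b))^((1:ℝ)/β) :=
      Real.rpow_le_rpow (Real.exp_pos _).le hbig hβ0.le
    have e3 : Real.exp 1 * Real.exp (-1) = 1 := by
      rw [← Real.exp_add]; norm_num
    have h1 : (1:ℝ) ≤ max (Real.exp 1) K * (lam/(c-b))^((1:ℝ)/β) := by
      calc (1:ℝ) = Real.exp 1 * Real.exp (-1) := e3.symm
        _ ≤ max (Real.exp 1) K * (lam/(c-b))^((1:ℝ)/β) :=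
            mul_le_mul (le_max_left _ _) (e1 ▸ e2)
              (Real.exp_pos _).le (le_trans (Real.exp_pos _).le (le_max_left _ _))
    calc wsize w E ≤ wsize w (Ioo a c) := wsize_mono w hEac
      _ ≤ ENNReal.ofReal (max (Real.exp 1) K * (lam/(c-b))^((1:ℝ)/β)) * wsize w (Ioo a c) :=
          le_mul_of_one_le_left (zero_le) (ENNReal.one_le_ofReal.2 h1)
  · push_neg at hbig
    set α := 1 - lam/(c-b) with hαdef
    have hα1 : 1 - Real.exp (-β) < α := by rw [hαdef]; linarith
    have hα2 : α < 1 := by rw [hαdef]; linarith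
    have hδeq : (1 - α)^((1:ℝ)/β) = (lam/(c-b))^((1:ℝ)/β) := by
      rw [hαdef]; ring_nf
    set δ := (lam/(c-b))^((1:ℝ)/β) with hδdef
    have hKδ : 0 ≤ K * δ := mul_nonneg hK hδ_nonneg
    have hofReal : ENNReal.ofReal (1 + K * (1-α)^((1:ℝ)/β)) = 1 + ENNReal.ofReal (K*δ) := by
      rw [hδeq, ENNReal.ofReal_add zero_le_one hKδ, ENNReal.ofReal_one]
    set G := Ioo a c \ E with hGdef
    have hGm : MeasurableSet G := measurableSet_Ioo.diff hE
    have hacfin : wsize w (Ioo a c) < ⊤ := wsize_Ioo_lt_top hloc a c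
    have hGfin : wsize w G < ⊤ := lt_of_le_of_lt (wsize_mono w diff_subset) hacfin
    have hEfin : wsize w E < ⊤ := lt_of_le_of_lt (wsize_mono w hEac) hacfin
    have hsplit : wsize w G + wsize w E = wsize w (Ioo a c) := by
      unfold wsize
      rw [← lintegral_union hE disjoint_sdiff_left, diff_union_of_subset hEac]
    have hcover : ∀ F : Set ℝ, MeasurableSet F → Ioo a c \ E ⊆ F → Ioo a c ⊆ halo α F :=
      fun F hF hsub => cover_halo hab hbc hEab hvol0 hF hsub
    by_cases hG0 : wsize w G = 0
    · exfalso
      set νm := volume.withDensity (fun x => ENNReal.ofReal (w x)) with hνdef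
      have hν : ∀ s : Set ℝ, MeasurableSet s → wsize w s = νm s :=
        fun s hs => (withDensity_apply _ hs).symm
      set g : ℝ → ENNReal := fun t => wsize w (E ∩ Ioo a t) with hgdef
      have hgmono : ∀ {s t : ℝ}, s ≤ t → g s ≤ g t := fun {s t} hst =>
        wsize_mono w (inter_subset_inter_right _ (Ioo_subset_Ioo le_rfl hst))
      have hga : g a = 0 := by
        simp only [hgdef, Ioo_self, inter_empty]
        exact wsize_null w (by simp)
      set Z := {t : ℝ | t ≤ b ∧ g t = 0} with hZdef
      have hZne : Z.Nonempty := ⟨a, hab.le, hga⟩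
      have hZbdd : BddAbove Z := ⟨b, fun t ht => ht.1⟩
      set t₀ := sSup Z with ht₀def
      have hzero_lt : ∀ t : ℝ, t < t₀ → g t = 0 := by
        intro t ht
        obtain ⟨z, hz, htz⟩ := exists_lt_of_lt_csSup hZne ht
        exact le_antisymm (le_trans (hgmono htz.le) (le_of_eq hz.2)) (zero_le)
      have hgt₀ : g t₀ = 0 := by
        have hU : E ∩ Ioo a t₀ = ⋃ n : ℕ, E ∩ Ioo a (t₀ - 1/(n+1)) := by
          ext x
          simp only [mem_iUnion, mem_inter_iff, mem_Ioo]
          constructor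
          · rintro ⟨hxE, hax, hxt⟩
            obtain ⟨n, hn⟩ := exists_nat_one_div_lt (sub_pos.2 hxt)
            exact ⟨n, hxE, hax, by linarith⟩
          · rintro ⟨n, hxE, hax, hxt⟩
            have hp : (0:ℝ) < 1/((n:ℝ)+1) := by positivity
            exact ⟨hxE, hax, by linarith⟩
        calc g t₀ = νm (E ∩ Ioo a t₀) := hν _ (hE.inter measurableSet_Ioo)
          _ = νm (⋃ n : ℕ, E ∩ Ioo a (t₀ - 1/(n+1))) := by rw [← hU]
          _ = 0 := measure_iUnion_null fun n => by
              rw [← hν _ (hE.inter measurableSet_Ioo)]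
              exact hzero_lt _ (by
                have hp : (0:ℝ) < 1/((n:ℝ)+1) := by positivity
                linarith)
      have hgb : g b = wsize w E := by
        have he : E ∩ Ioo a b = E := inter_eq_self_of_subset_left hEab
        simp only [hgdef]
        rw [he]
      have hpos : ∀ n : ℕ, 0 < g (t₀ + 1/(n+1)) := by
        intro n
        rcases eq_or_ne (g (t₀ + 1/(n+1))) 0 with h0 | h0
        · exfalso
          have hp : (0:ℝ) < 1/((n:ℝ)+1) := by positivity
          by_cases htb : t₀ + 1/(n+1) ≤ b
          · have hmem : t₀ + 1/((n:ℝ)+1) ∈ Z := ⟨htb, h0⟩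
            have := le_csSup hZbdd hmem
            rw [← ht₀def] at this
            linarith
          · push_neg at htb
            have hgb0 : g b = 0 :=
              le_antisymm (le_trans (hgmono htb.le) (le_of_eq h0)) (zero_le)
            rw [hgb] at hgb0
            exact hws0 hgb0
        · exact (zero_le).lt_of_ne (Ne.symm h0)
      set s : ℕ → Set ℝ := fun n => E ∩ Ioo a (t₀ + 1/(n+1)) with hsdef
      have hsm : ∀ n, MeasurableSet (s n) := fun n => hE.inter measurableSet_Ioo
      have hanti : Antitone s := by
        intro m n hmn
        apply inter_subset_inter_right
        apply Ioo_subset_Ioo le_rfl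
        have h1 : (1:ℝ)/((n:ℝ)+1) ≤ 1/((m:ℝ)+1) := by
          apply one_div_le_one_div_of_le (by positivity)
          exact_mod_cast Nat.succ_le_succ hmn
        linarith
      have hInter : ⋂ n, s n = E ∩ Ioc a t₀ := by
        ext x
        simp only [mem_iInter, hsdef, mem_inter_iff, mem_Ioo, mem_Ioc]
        constructor
        · intro hx
          refine ⟨(hx 0).1, (hx 0).2.1, ?_⟩
          by_contra hgt
          push_neg at hgt
          obtain ⟨n, hn⟩ := exists_nat_one_div_lt (sub_pos.2 hgt)
          exact absurd (hx n).2.2 (not_lt.2 (by linarith))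
        · rintro ⟨hxE, hax, hxt⟩ n
          have hp : (0:ℝ) < 1/((n:ℝ)+1) := by positivity
          exact ⟨hxE, hax, by linarith⟩
      have hν_inter : νm (E ∩ Ioc a t₀) = 0 := by
        have h1 : E ∩ Ioc a t₀ ⊆ (E ∩ Ioo a t₀) ∪ {t₀} := by
          rintro x ⟨hxE, hax, hxt⟩
          rcases lt_or_eq_of_le hxt with hlt | heq
          · exact Or.inl ⟨hxE, hax, hlt⟩
          · exact Or.inr (by simp [heq])
        refine le_antisymm ?_ (zero_le)
        calc νm (E ∩ Ioc a t₀) ≤ νm ((E ∩ Ioo a t₀) ∪ {t₀}) := measure_mono h1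
          _ ≤ νm (E ∩ Ioo a t₀) + νm {t₀} := measure_union_le _ _
          _ = 0 := by
              have h2 : νm (E ∩ Ioo a t₀) = 0 := by
                rw [← hν _ (hE.inter measurableSet_Ioo)]
                exact hgt₀
              have h3 : νm {t₀} = 0 := by
                rw [← hν _ (measurableSet_singleton _)]
                exact wsize_null w Real.volume_singleton
              rw [h2, h3, add_zero]
      have hfin0 : νm (s 0) ≠ ⊤ := by
        rw [← hν _ (hsm 0)]
        exact (lt_of_le_of_lt (wsize_mono w ((inter_subset_left).trans hEac)) hacfin).ne
      have hlim : Filter.Tendsto (fun n => νm (s n)) Filter.atTop (nhds 0) := by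
        have ht := MeasureTheory.tendsto_measure_iInter_atTop (μ := νm)
          (fun n => (hsm n).nullMeasurableSet) hanti ⟨0, hfin0⟩
        rw [hInter, hν_inter] at ht
        exact ht
      have hmain : ∀ n : ℕ, wsize w E ≤
          ENNReal.ofReal (1 + K * (1-α)^((1:ℝ)/β)) * νm (s n) := by
        intro n
        have hFm : MeasurableSet (G ∪ s n) := hGm.union (hsm n)
        have hFsub : G ∪ s n ⊆ Ioo a c :=
          union_subset diff_subset ((inter_subset_left).trans hEac)
        have hFfin : wsize w (G ∪ s n) < ⊤ :=
          lt_of_le_of_lt (wsize_mono w hFsub) hacfin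
        have hFpos : 0 < wsize w (G ∪ s n) :=
          lt_of_lt_of_le (hpos n) (wsize_mono w subset_union_right)
        have happ := h α hα1 hα2 (G ∪ s n) hFm hFpos hFfin
        have hcov := hcover (G ∪ s n) hFm subset_union_left
        have hsub2 : wsize w (G ∪ s n) ≤ νm (s n) := by
          rw [hν _ hFm]
          calc νm (G ∪ s n) ≤ νm G + νm (s n) := measure_union_le _ _
            _ = νm (s n) := by rw [← hν _ hGm, hG0, zero_add]
        calc wsize w E ≤ wsize w (Ioo a c) := wsize_mono w hEac
          _ ≤ wsize w (halo α (G ∪ s n)) := wsize_mono w hcov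
          _ ≤ ENNReal.ofReal (1 + K * (1-α)^((1:ℝ)/β)) * wsize w (G ∪ s n) := happ
          _ ≤ ENNReal.ofReal (1 + K * (1-α)^((1:ℝ)/β)) * νm (s n) :=
              mul_le_mul_right hsub2 _
      have hlim2 : Filter.Tendsto
          (fun n => ENNReal.ofReal (1 + K * (1-α)^((1:ℝ)/β)) * νm (s n))
          Filter.atTop (nhds 0) := by
        have ht := ENNReal.Tendsto.const_mul (a := ENNReal.ofReal (1 + K * (1-α)^((1:ℝ)/β)))
          hlim (Or.inr ENNReal.ofReal_ne_top)
        simpa using ht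
      exact hws0 (le_antisymm (ge_of_tendsto' hlim2 hmain) (zero_le))
    · have hGpos : 0 < wsize w G := (zero_le).lt_of_ne (Ne.symm hG0)
      have happ := h α hα1 hα2 G hGm hGpos hGfin
      have hcov := hcover G hGm subset_rfl
      have hchain : wsize w G + wsize w E ≤ wsize w G + ENNReal.ofReal (K*δ) * wsize w G := by
        calc wsize w G + wsize w E = wsize w (Ioo a c) := hsplit
          _ ≤ wsize w (halo α G) := wsize_mono w hcov
          _ ≤ ENNReal.ofReal (1 + K * (1-α)^((1:ℝ)/β)) * wsize w G := happ
          _ = (1 + ENNReal.ofReal (K*δ)) * wsize w G := by rw [hofReal]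
          _ = wsize w G + ENNReal.ofReal (K*δ) * wsize w G := by rw [add_mul, one_mul]
      have hEle : wsize w E ≤ ENNReal.ofReal (K*δ) * wsize w G :=
        (ENNReal.add_le_add_iff_left hGfin.ne).1 hchain
      calc wsize w E ≤ ENNReal.ofReal (K*δ) * wsize w G := hEle
        _ ≤ ENNReal.ofReal (max (Real.exp 1) K * δ) * wsize w (Ioo a c) :=
            mul_le_mul' (ENNReal.ofReal_le_ofReal
                (mul_le_mul_of_nonneg_right (le_max_right _ _) hδ_nonneg))
              (wsize_mono w diff_subset)
end

section
/- Let a < b < c be real numbers, E ⊆ (a,b) measurable with |E|/(c-b) < 1, and set E' = (a,c) \ E. Then for every x ∈ (a,c), M⁺1_{E'}(x) ≥ 1 - |E|/(c-b). In particular (a,c) ⊆ {x : M⁺1_{E'}(x) ≥ 1 - |E|/(c-b)}. -/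
/-!
Take the single window `h = c - x`. Since `E' ⊇ (x, c) \ E`, the average of `1_{E'}` over
`(x, c)` is at least `1 - |E ∩ (x, c)| / (c - x)`. If `x ≤ b` this is at least
`1 - |E| / (c - b)` because `c - x ≥ c - b`; if `x > b` the window misses `E` entirely.
-/

open MeasureTheory Set

lemma intervalIntegral_abs_indicator_one {s : Set ℝ} (hs : MeasurableSet s) {x y : ℝ}
    (hxy : x ≤ y) :
    ∫ t in x..y, |s.indicator (fun _ => (1:ℝ)) t| = volume.real (Ioc x y ∩ s) := by
  simp_rw [abs_of_nonneg (indicator_nonneg (fun _ _ => zero_le_one) _)]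
  rw [intervalIntegral.integral_of_le hxy, setIntegral_indicator hs, setIntegral_const,
    smul_eq_mul, mul_one]

lemma le_Mplus_indicator_one {s : Set ℝ} (hs : MeasurableSet s) (x : ℝ) {h : ℝ} (hh : 0 < h) :
    h⁻¹ * volume.real (Ioc x (x + h) ∩ s) ≤ Mplus (s.indicator fun _ => (1:ℝ)) x := by
  have average_le_one (r : ℝ) (hr : 0 < r) : r⁻¹ * volume.real (Ioc x (x + r) ∩ s) ≤ 1 := by
    rw [inv_mul_le_one₀ hr]
    calc volume.real (Ioc x (x + r) ∩ s) ≤ volume.real (Ioc x (x + r)) :=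
          measureReal_mono inter_subset_left measure_Ioc_lt_top.ne
      _ = r := by rw [Real.volume_real_Ioc_of_le (by linarith)]; ring
  have hbdd : BddAbove (range fun h : {h : ℝ // 0 < h} =>
      h.1⁻¹ * ∫ t in x..(x + h.1), |s.indicator (fun _ => (1:ℝ)) t|) := by
    refine ⟨1, ?_⟩
    rintro _ ⟨⟨r, hr⟩, rfl⟩
    dsimp only
    rw [intervalIntegral_abs_indicator_one hs (by linarith)]
    exact average_le_one r hr
  have := le_ciSup hbdd ⟨h, hh⟩
  rwa [intervalIntegral_abs_indicator_one hs (by linarith)] at this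

lemma measureReal_Ioo_inter_div_le {E : Set ℝ} (hfin : volume E ≠ ⊤) {b c x : ℝ}
    (hEb : E ⊆ Iic b) (hbc : b < c) (hxc : x < c) :
    volume.real (Ioo x c ∩ E) / (c - x) ≤ volume.real E / (c - b) := by
  rcases le_or_gt x b with hxb | hbx
  · exact div_le_div₀ measureReal_nonneg (measureReal_mono inter_subset_right)
      (by linarith) (by linarith)
  · have hdisj : Ioo x c ∩ E = ∅ :=
      eq_empty_of_forall_notMem fun t ⟨ht, htE⟩ => (hEb htE).not_gt (hbx.trans ht.1)
    rw [hdisj, measureReal_empty, zero_div]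
    exact div_nonneg measureReal_nonneg (by linarith)

lemma one_sub_div_le_Mplus_indicator_diff {a b c x : ℝ} {E : Set ℝ} (hE : MeasurableSet E)
    (hfin : volume E ≠ ⊤) (hEb : E ⊆ Iic b) (hbc : b < c) (hx : x ∈ Ioo a c) :
    1 - volume.real E / (c - b) ≤ Mplus ((Ioo a c \ E).indicator fun _ => (1:ℝ)) x := by
  have hcx : 0 < c - x := sub_pos.2 hx.2
  have hwindow : Ioc x (x + (c - x)) ∩ (Ioo a c \ E) = Ioo x c \ E := by
    rw [add_sub_cancel, ← inter_sdiff_assoc, Ioc_inter_Ioo_of_right_le le_rfl,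
      max_eq_left hx.1.le]
  have hsplit : volume.real (Ioo x c \ E) = (c - x) - volume.real (Ioo x c ∩ E) := by
    rw [eq_sub_iff_add_eq, measureReal_sdiff_add_inter hE measure_Ioo_lt_top.ne,
      Real.volume_real_Ioo_of_le hx.2.le]
  calc 1 - volume.real E / (c - b)
      ≤ 1 - volume.real (Ioo x c ∩ E) / (c - x) :=
        sub_le_sub_left (measureReal_Ioo_inter_div_le hfin hEb hbc hx.2) 1
    _ = (c - x)⁻¹ * volume.real (Ioc x (x + (c - x)) ∩ (Ioo a c \ E)) := by
        rw [hwindow, hsplit]; field_simp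
    _ ≤ _ := le_Mplus_indicator_one (measurableSet_Ioo.diff hE) x hcx

theorem stmt10_general (a b c : ℝ) (hbc : b < c) (E : Set ℝ)
    (hE : MeasurableSet E) (hEsub : E ⊆ Ioo a b) :
    (∀ x ∈ Ioo a c,
      1 - (volume E).toReal / (c - b) ≤ Mplus ((Ioo a c \ E).indicator fun _ => (1:ℝ)) x) ∧
    Ioo a c ⊆ {x : ℝ |
      1 - (volume E).toReal / (c - b) ≤ Mplus ((Ioo a c \ E).indicator fun _ => (1:ℝ)) x} := by
  have hfin : volume E ≠ ⊤ := measure_ne_top_of_subset hEsub measure_Ioo_lt_top.ne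
  have bound (x : ℝ) (hx : x ∈ Ioo a c) :=
    one_sub_div_le_Mplus_indicator_diff hE hfin (fun t ht => (hEsub ht).2.le) hbc hx
  exact ⟨bound, bound⟩

theorem stmt10 (a b c : ℝ) (hab : a < b) (hbc : b < c) (E : Set ℝ)
    (hE : MeasurableSet E) (hEsub : E ⊆ Ioo a b)
    (hsmall : (volume E).toReal / (c - b) < 1) :
    (∀ x ∈ Ioo a c,
      1 - (volume E).toReal / (c - b) ≤ Mplus ((Ioo a c \ E).indicator fun _ => (1:ℝ)) x) ∧
    Ioo a c ⊆ {x : ℝ |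
      1 - (volume E).toReal / (c - b) ≤ Mplus ((Ioo a c \ E).indicator fun _ => (1:ℝ)) x} :=
  stmt10_general a b c hbc E hE hEsub
end
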